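/- arXiv:2406.00491 — 2 statements merged into one kernel-verified Lean document; each statement's English description precedes it below -/
import Mathlib

section
/- Let m ≥ 2 be an integer, λ ∈ (0, 1/2], and θ ∈ (-λ/(1-λ), 0). Then -φ(1)/φ(2) ≥ (1-λ)/(2λ) · (1 - λ²/(3λ²-3λ+1))^{m-1}, where φ(k) = k·θ^{k-1}·(1-λ+λθ^k)^{m-1}. In particular the ratio of consecutive terms satisfies -φ(1)/φ(2) = -(1/(2θ))·((1-λ+λθ)/(1-λ+λθ²))^{m-1}. -/
theorem phi_ratio_bound (m : ℕ) (hm : 2 ≤ m) (lam : ℝ) (hlam0 : 0 < lam)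
    (hlam : lam ≤ 1 / 2) (θ : ℝ) (hθ1 : -lam / (1 - lam) < θ) (hθ2 : θ < 0)
    (φ : ℕ → ℝ)
    (hφ : ∀ k : ℕ, φ k = k * θ ^ (k - 1) * (1 - lam + lam * θ ^ k) ^ (m - 1)) :
    -φ 1 / φ 2 ≥ (1 - lam) / (2 * lam)
        * (1 - lam ^ 2 / (3 * lam ^ 2 - 3 * lam + 1)) ^ (m - 1) ∧
      -φ 1 / φ 2
        = -(1 / (2 * θ)) * ((1 - lam + lam * θ) / (1 - lam + lam * θ ^ 2)) ^ (m - 1) := by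
  have h1 : (0:ℝ) < 1 - lam := by linarith
  have hθne : θ ≠ 0 := ne_of_lt hθ2
  have hθ1' : -lam < θ * (1 - lam) := by
    have := (div_lt_iff₀ h1).mp hθ1
    linarith
  have hden3 : (0:ℝ) < 3 * lam ^ 2 - 3 * lam + 1 := by nlinarith [sq_nonneg (lam - 1/2)]
  have hnum0 : 0 < 1 - lam + lam * θ := by nlinarith
  have hden0 : 0 < 1 - lam + lam * θ ^ 2 := by nlinarith [sq_nonneg θ]
  have hθn : θ * (1 - lam) < 0 := mul_neg_of_neg_of_pos hθ2 h1
  have hsq : θ ^ 2 * (1 - lam) ^ 2 < lam ^ 2 := by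
    nlinarith [mul_pos (show (0:ℝ) < θ * (1 - lam) + lam by linarith)
      (show (0:ℝ) < lam - θ * (1 - lam) by linarith)]
  -- equality part
  have hφ1 : φ 1 = (1 - lam + lam * θ) ^ (m - 1) := by
    rw [hφ 1]; norm_num
  have hφ2 : φ 2 = 2 * θ * (1 - lam + lam * θ ^ 2) ^ (m - 1) := by
    rw [hφ 2]; norm_num
  have heq : -φ 1 / φ 2
      = -(1 / (2 * θ)) * ((1 - lam + lam * θ) / (1 - lam + lam * θ ^ 2)) ^ (m - 1) := by
    rw [hφ1, hφ2, div_pow]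
    field_simp
  refine ⟨?_, heq⟩
  rw [heq]
  have hc0 : 0 ≤ 1 - lam ^ 2 / (3 * lam ^ 2 - 3 * lam + 1) := by
    rw [sub_nonneg, div_le_one hden3]; nlinarith
  have hc : 1 - lam ^ 2 / (3 * lam ^ 2 - 3 * lam + 1)
      ≤ (1 - lam + lam * θ) / (1 - lam + lam * θ ^ 2) := by
    rw [sub_le_iff_le_add, div_add_div _ _ (ne_of_gt hden0) (ne_of_gt hden3),
      le_div_iff₀ (by positivity)]
    nlinarith [mul_nonneg (mul_nonneg (by linarith : (0:ℝ) ≤ 1 - 2*lam) hlam0.le)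
        (show (0:ℝ) ≤ lam ^ 2 - θ ^ 2 * (1 - lam) ^ 2 by linarith),
      mul_nonneg hden3.le (show (0:ℝ) ≤ lam * θ * (1 - lam) + lam ^ 2 by nlinarith)]
  have hcpow : (1 - lam ^ 2 / (3 * lam ^ 2 - 3 * lam + 1)) ^ (m - 1)
      ≤ ((1 - lam + lam * θ) / (1 - lam + lam * θ ^ 2)) ^ (m - 1) :=
    pow_le_pow_left₀ hc0 hc _
  have h_a : (1 - lam) / (2 * lam) ≤ -(1 / (2 * θ)) := by
    have h2 : -(1 / (2 * θ)) = 1 / (-(2 * θ)) := by ring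
    rw [h2, div_le_div_iff₀ (by positivity) (by linarith : (0:ℝ) < -(2 * θ))]
    nlinarith
  have h_apos : (0:ℝ) ≤ (1 - lam) / (2 * lam) := by positivity
  calc (1 - lam) / (2 * lam) * (1 - lam ^ 2 / (3 * lam ^ 2 - 3 * lam + 1)) ^ (m - 1)
      ≤ -(1 / (2 * θ)) * ((1 - lam + lam * θ) / (1 - lam + lam * θ ^ 2)) ^ (m - 1) := by
        apply mul_le_mul h_a hcpow (by positivity) (le_trans h_apos h_a)
end

section
/- In the Wait-and-Go model, the return probability to the Idle state satisfies the combinatorial formula: for k ≥ 1, φ(k) = (1-r)^{k-1} + ∑_{ε=1}^{⌊(k-1)/(H+2)⌋} C(k-1-(H+1)ε, ε)·r^ε·(1-r)^{k-1-(H+2)ε}, where φ(k) = Prob(x_k = 0 | x_1 = 0), i.e., φ counts sequences of steps composed of blocks of length 1 (stay idle, weight 1-r) and blocks of length H+2 (transmit cycle, weight r), tiling an interval of length k-1. -/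
/-!
Weight a tiling of a length-`n` strip by `x` per block of length `H + 2` and `y` per unit cell.
The tilings with `ε` blocks contribute `C(n - (H + 1) ε, ε) x ^ ε y ^ (n - (H + 2) ε)`; let `T n`
be the total. Pascal's rule, applied termwise, shows
that `T (n + H + 2) = y T (n + H + 1) + x T n` (the last tile is a cell or a block), while
`T n = y ^ n` for `n < H + 2`. Hence `k ↦ T (k - 1)` obeys the same recursion and initial values
as `φ`, so the two agree.
-/

open Finset

section Tiling

variable {R : Type*} [CommSemiring R] (H : ℕ) (x y : R)

-- The truncated subtractions are harmless: the binomial vanishes once `n < (H + 2) ε`.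
noncomputable def tilingTerm (n ε : ℕ) : R :=
  ((n - (H + 1) * ε).choose ε : R) * x ^ ε * y ^ (n - (H + 2) * ε)

noncomputable def tilingSum (n : ℕ) : R :=
  ∑ ε ∈ range (n + 1), tilingTerm H x y n ε

variable {H x y}

@[simp]
lemma tilingTerm_zero_right (n : ℕ) : tilingTerm H x y n 0 = y ^ n := by
  simp [tilingTerm]

lemma tilingTerm_eq_zero_of_lt {n ε : ℕ} (h : n < (H + 2) * ε) : tilingTerm H x y n ε = 0 := by
  have hmul : (H + 2) * ε = (H + 1) * ε + ε := by ring
  have hε : ε ≠ 0 := by rintro rfl; simp at h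
  rw [tilingTerm, Nat.choose_eq_zero_of_lt (by omega), Nat.cast_zero, zero_mul, zero_mul]

lemma sum_range_tilingTerm {n N : ℕ} (hN : n < (H + 2) * N) :
    ∑ ε ∈ range N, tilingTerm H x y n ε = tilingSum H x y n := by
  have hzero : ∀ M, n < (H + 2) * M → ∀ ε ≥ M, tilingTerm H x y n ε = 0 := fun M hM ε hε =>
    tilingTerm_eq_zero_of_lt (hM.trans_le (Nat.mul_le_mul_left _ hε))
  rcases le_total N (n + 1) with h | h
  · exact (eventually_constant_sum (hzero N hN) h).symm
  · exact eventually_constant_sum (hzero (n + 1) (by nlinarith)) h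

lemma tilingSum_of_lt {n : ℕ} (hn : n < H + 2) : tilingSum H x y n = y ^ n := by
  rw [← sum_range_tilingTerm (N := 1) (by omega), sum_range_one, tilingTerm_zero_right]

lemma tilingSum_eq_add_sum_Icc (n : ℕ) :
    tilingSum H x y n = y ^ n + ∑ ε ∈ Icc 1 (n / (H + 2)), tilingTerm H x y n ε := by
  rw [← sum_range_tilingTerm (N := n / (H + 2) + 1) (Nat.lt_mul_div_succ n (by omega)),
    ← Nat.Ico_zero_eq_range, sum_eq_sum_Ico_succ_bot (Nat.add_one_pos _), zero_add,
    Ico_add_one_right_eq_Icc, tilingTerm_zero_right]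

lemma tilingTerm_add_add_two (n ε : ℕ) :
    tilingTerm H x y (n + H + 2) (ε + 1) =
      y * tilingTerm H x y (n + H + 1) (ε + 1) + x * tilingTerm H x y n ε := by
  have hmul : (H + 2) * ε = H * ε + 2 * ε := by ring
  have hmul' : (H + 1) * ε = H * ε + ε := by ring
  have hmul₁ : (H + 2) * (ε + 1) = H * ε + 2 * ε + H + 2 := by ring
  have hmul₁' : (H + 1) * (ε + 1) = H * ε + ε + H + 1 := by ring
  rcases lt_or_ge n ((H + 2) * ε) with hn | hn
  · rw [tilingTerm_eq_zero_of_lt (by omega), tilingTerm_eq_zero_of_lt (by omega),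
      tilingTerm_eq_zero_of_lt hn, mul_zero, mul_zero, add_zero]
  obtain ⟨d, rfl⟩ := Nat.exists_eq_add_of_le hn
  cases d with
  | zero =>
    rw [tilingTerm_eq_zero_of_lt (n := _ + H + 1) (by omega), mul_zero, zero_add, tilingTerm,
      tilingTerm, show (H + 2) * ε + 0 + H + 2 - (H + 1) * (ε + 1) = ε + 1 by omega,
      show (H + 2) * ε + 0 + H + 2 - (H + 2) * (ε + 1) = 0 by omega,
      show (H + 2) * ε + 0 - (H + 1) * ε = ε by omega,
      show (H + 2) * ε + 0 - (H + 2) * ε = 0 by omega, Nat.choose_self, Nat.choose_self]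
    push_cast
    ring
  | succ d =>
    unfold tilingTerm
    rw [show (H + 2) * ε + (d + 1) + H + 2 - (H + 1) * (ε + 1) = (ε + d + 1) + 1 by omega,
      show (H + 2) * ε + (d + 1) + H + 2 - (H + 2) * (ε + 1) = d + 1 by omega,
      show (H + 2) * ε + (d + 1) + H + 1 - (H + 1) * (ε + 1) = ε + d + 1 by omega,
      show (H + 2) * ε + (d + 1) + H + 1 - (H + 2) * (ε + 1) = d by omega,
      show (H + 2) * ε + (d + 1) - (H + 1) * ε = ε + d + 1 by omega,
      show (H + 2) * ε + (d + 1) - (H + 2) * ε = d + 1 by omega,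
      Nat.choose_succ_succ]
    push_cast
    ring

lemma tilingSum_add_add_two (n : ℕ) :
    tilingSum H x y (n + H + 2) = y * tilingSum H x y (n + H + 1) + x * tilingSum H x y n := by
  rw [← sum_range_tilingTerm (N := n + 2) (by nlinarith),
    ← sum_range_tilingTerm (N := n + 2) (by nlinarith), tilingSum,
    sum_range_succ' _ (n + 1), sum_range_succ' _ (n + 1)]
  simp only [tilingTerm_add_add_two, sum_add_distrib, ← mul_sum, tilingTerm_zero_right]
  ring

end Tiling

theorem wag_return_probability_closed_form_general (H : ℕ)
    (r : ℝ) (φ : ℤ → ℝ)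
    (hneg : ∀ k : ℤ, k ≤ 0 → φ k = 0) (hone : φ 1 = 1)
    (hrec : ∀ k : ℤ, 2 ≤ k → φ k = (1 - r) * φ (k - 1) + r * φ (k - H - 2)) :
    ∀ k : ℕ, 1 ≤ k →
      φ k = (1 - r) ^ (k - 1)
        + ∑ ε ∈ Finset.Icc 1 ((k - 1) / (H + 2)),
            ((k - 1 - (H + 1) * ε).choose ε : ℝ) * r ^ ε * (1 - r) ^ (k - 1 - (H + 2) * ε) := by
  suffices h : ∀ n : ℕ, φ (n + 1) = tilingSum H r (1 - r) n by
    intro k hk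
    obtain ⟨n, rfl⟩ := Nat.exists_eq_add_of_le' hk
    simpa [tilingSum_eq_add_sum_Icc, tilingTerm] using h n
  intro n
  induction n using Nat.strong_induction_on with
  | _ n ih =>
    rcases n with _ | n
    · simpa [tilingSum_of_lt] using hone
    rw [hrec _ (by omega), show ((n + 1 : ℕ) : ℤ) + 1 - 1 = n + 1 by push_cast; ring,
      ih n (by omega)]
    rcases lt_or_ge n (H + 1) with hn | hn
    · rw [hneg _ (by omega), tilingSum_of_lt (by omega), tilingSum_of_lt (by omega)]
      ring
    obtain ⟨m, rfl⟩ : ∃ m, n = m + H + 1 := ⟨n - (H + 1), by omega⟩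
    rw [show ((m + H + 1 + 1 : ℕ) : ℤ) + 1 - H - 2 = m + 1 by push_cast; ring, ih m (by omega)]
    exact (tilingSum_add_add_two m).symm

theorem wag_return_probability_closed_form (H : ℕ) (hH : 1 ≤ H)
    (r : ℝ) (hr : 0 < r) (hr1 : r < 1) (φ : ℤ → ℝ)
    (hneg : ∀ k : ℤ, k ≤ 0 → φ k = 0) (hone : φ 1 = 1)
    (hrec : ∀ k : ℤ, 2 ≤ k → φ k = (1 - r) * φ (k - 1) + r * φ (k - H - 2)) :
    ∀ k : ℕ, 1 ≤ k →
      φ k = (1 - r) ^ (k - 1)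
        + ∑ ε ∈ Finset.Icc 1 ((k - 1) / (H + 2)),
            ((k - 1 - (H + 1) * ε).choose ε : ℝ) * r ^ ε * (1 - r) ^ (k - 1 - (H + 2) * ε) :=
  wag_return_probability_closed_form_general H r φ hneg hone hrec
end
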